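/- arXiv:1604.01506 — 2 statements merged into one kernel-verified Lean document; each statement's English description precedes it below -/
import Mathlib

section
/- Let n ≥ 2 be an integer and define f(t₁, t₂) = 1/t₁ + (n−1)^{n−1} t₁^{n−1} / t₂ for t₁, t₂ > 0. If (a₁, a₂) and (b₁, b₂) satisfy 0 < b₁ ≤ a₁, 0 < b₂ ≤ a₂, (n−1)ⁿ a₁ⁿ ≤ a₂ and (n−1)ⁿ b₁ⁿ ≤ b₂, then f(a₁, a₂) ≤ f(b₁, b₂). -/
lemma pow_sub_pow_le_aux (a b : ℝ) (hb : 0 ≤ b) (hba : b ≤ a) :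
    ∀ m : ℕ, a ^ (m + 1) - b ^ (m + 1) ≤ (m + 1) * a ^ m * (a - b) := by
  have ha : 0 ≤ a := hb.trans hba
  intro m
  induction m with
  | zero => simp
  | succ m ih =>
    have h1 : a ^ (m + 2) - b ^ (m + 2) = a * (a ^ (m+1) - b ^ (m+1)) + b ^ (m+1) * (a - b) := by
      ring
    have h2 : a * (a ^ (m+1) - b ^ (m+1)) ≤ a * ((m + 1) * a ^ m * (a - b)) :=
      mul_le_mul_of_nonneg_left ih ha
    have h3 : b ^ (m+1) * (a - b) ≤ a ^ (m+1) * (a - b) :=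
      mul_le_mul_of_nonneg_right (pow_le_pow_left₀ hb hba _) (by linarith)
    have h4 : a * ((m + 1) * a ^ m * (a - b)) + a ^ (m+1) * (a - b)
        = (↑(m+1) + 1) * a ^ (m+1) * (a - b) := by push_cast; ring
    push_cast at *
    nlinarith [h1, h2, h3, h4]

/-- Let `n ≥ 2` and `f(t₁, t₂) = 1/t₁ + (n−1)^(n−1) t₁^(n−1) / t₂` for `t₁, t₂ > 0`.
If `(a₁, a₂)` and `(b₁, b₂)` satisfy `0 < b₁ ≤ a₁`, `0 < b₂ ≤ a₂`, `(n−1)ⁿ a₁ⁿ ≤ a₂` and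
`(n−1)ⁿ b₁ⁿ ≤ b₂`, then `f(a₁, a₂) ≤ f(b₁, b₂)`. -/
theorem antitone_on_region (n : ℕ) (hn : 2 ≤ n) (a₁ a₂ b₁ b₂ : ℝ)
    (hb₁ : 0 < b₁) (hb₂ : 0 < b₂) (hba₁ : b₁ ≤ a₁) (hba₂ : b₂ ≤ a₂)
    (ha : ((n : ℝ) - 1) ^ n * a₁ ^ n ≤ a₂) (hb : ((n : ℝ) - 1) ^ n * b₁ ^ n ≤ b₂) :
    1 / a₁ + ((n : ℝ) - 1) ^ (n - 1) * a₁ ^ (n - 1) / a₂ ≤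
      1 / b₁ + ((n : ℝ) - 1) ^ (n - 1) * b₁ ^ (n - 1) / b₂ := by
  obtain ⟨k, rfl⟩ : ∃ k, n = k + 2 := ⟨n - 2, by omega⟩
  have ha₁ : 0 < a₁ := hb₁.trans_le hba₁
  have ha₂ : 0 < a₂ := hb₂.trans_le hba₂
  have hsub : ((↑(k + 2) : ℝ) - 1) = (k : ℝ) + 1 := by push_cast; ring
  rw [hsub] at ha hb
  rw [show k + 2 - 1 = k + 1 from rfl, hsub]
  set c : ℝ := (k : ℝ) + 1 with hcdef
  have hc : 0 < c := by positivity
  -- now goal: 1/a₁ + c^(k+1)*a₁^(k+1)/a₂ ≤ 1/b₁ + c^(k+1)*b₁^(k+1)/b₂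
  have key : a₁ ^ (k+1) - b₁ ^ (k+1) ≤ (k + 1) * a₁ ^ k * (a₁ - b₁) :=
    pow_sub_pow_le_aux a₁ b₁ hb₁.le hba₁ k
  have hden : 0 < c ^ (k+2) * a₁ ^ (k+2) := by positivity
  have step1 : c ^ (k+1) * a₁ ^ (k+1) / a₂ - c ^ (k+1) * b₁ ^ (k+1) / a₂ ≤ 1 / b₁ - 1 / a₁ := by
    have h1 : c ^ (k+1) * a₁ ^ (k+1) / a₂ - c ^ (k+1) * b₁ ^ (k+1) / a₂
        = c ^ (k+1) * (a₁ ^ (k+1) - b₁ ^ (k+1)) / a₂ := by ring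
    have h2 : c ^ (k+1) * (a₁ ^ (k+1) - b₁ ^ (k+1)) / a₂
        ≤ c ^ (k+1) * ((k + 1) * a₁ ^ k * (a₁ - b₁)) / a₂ := by
      gcongr
    have hnum : 0 ≤ c ^ (k+1) * ((k + 1) * a₁ ^ k * (a₁ - b₁)) := by
      have : (0:ℝ) ≤ a₁ - b₁ := by linarith
      positivity
    have h3 : c ^ (k+1) * ((k + 1) * a₁ ^ k * (a₁ - b₁)) / a₂
        ≤ c ^ (k+1) * ((k + 1) * a₁ ^ k * (a₁ - b₁)) / (c ^ (k+2) * a₁ ^ (k+2)) :=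
      div_le_div_of_nonneg_left hnum hden ha
    have h4 : c ^ (k+1) * ((k + 1) * a₁ ^ k * (a₁ - b₁)) / (c ^ (k+2) * a₁ ^ (k+2))
        = (a₁ - b₁) / a₁ ^ 2 := by
      rw [hcdef]
      field_simp
      ring
    have h5 : (a₁ - b₁) / a₁ ^ 2 ≤ (a₁ - b₁) / (a₁ * b₁) := by
      apply div_le_div_of_nonneg_left (by linarith) (by positivity)
      nlinarith
    have h6 : (a₁ - b₁) / (a₁ * b₁) = 1 / b₁ - 1 / a₁ := by
      rw [div_sub_div _ _ hb₁.ne' ha₁.ne']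
      ring
    linarith
  have step2 : c ^ (k+1) * b₁ ^ (k+1) / a₂ ≤ c ^ (k+1) * b₁ ^ (k+1) / b₂ :=
    div_le_div_of_nonneg_left (by positivity) hb₂ hba₂
  linarith
end

section
/- Let n ≥ 2 be an integer, let μ be a measure on a measurable space, let Ω′ be a measurable set with μ(Ω′) < ∞, and let φ : Ω′ → [−∞, 0] be a measurable function. Let A, B, c, δ, C > 0 be constants such that: (i) for all t > 0, μ({x ∈ Ω′ : φ(x) < −t}) ≤ C · δ^{2n} · (1 + t^{(n+1)/n} A^{−1/n})^{n−1} · e^{−2n · t^{(n+1)/n} A^{−1/n}}; and (ii) ∫_{Ω′} e^{−2cφ} dμ ≤ B. Then for every λ with c < λ < (n+1)c/n one has ∫_{Ω′} e^{−2λφ} dμ ≤ μ(Ω′) + 2λ · [ (B/(2(λ−c))) · e^{2(λ−c) A cⁿ n^{−n}} + (1/2) · C δ^{2n} · (1 + 2^{n+1} A λ^{n+1} n^{−n−1})^{n−1} · ((n+1)c/n − λ)^{−1} · e^{2(λ−c) A cⁿ n^{−n}} + C δ^{2n} · (n² / (λ(n+2))) · ∫₀^{∞} (1+2x)^{n−1}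 e^{−2nx} dx ]. -/
/-!
By the layer-cake formula, `∫_{Ω'} e^{-2λφ} dμ = μ Ω' + ∫₀^∞ 2λ e^{2λt} μ({φ < -t} ∩ Ω') dt`.
Write `X t = t^{(n+1)/n} A^{-1/n}` and split the `t`-integral at `t₁ = A (c/n)ⁿ` and
`t₂ = A (2λ/n)ⁿ`. On `(0, t₁]`, Chebyshev's inequality and (ii) give `μ(…) ≤ B e^{-2ct}`.
On `(t₁, t₂]` we use (i): the convex function `X` lies above its tangent line at `t₁`, whose
slope is `(n+1)c/n²`, so `2λt - 2n X t` lies below a line of slope `-2((n+1)c/n - λ) < 0`,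
while the polynomial factor is at most its value at `t₂`. On `(t₂, ∞)` the substitution
`x = X t - λt/n` turns `e^{2λt - 2n X t}` into `e^{-2nx}`; there `X t ≤ 2x` and
`dx/dt ≥ λ(n+2)/n²`.
-/

open MeasureTheory ENNReal Set

theorem integral_Ioo_mul_exp_mul {k s : ℝ} (hs : 0 ≤ s) :
    ∫ t in Ioo 0 s, k * Real.exp (k * t) = Real.exp (k * s) - 1 := by
  have hderiv (t : ℝ) : HasDerivAt (fun t ↦ Real.exp (k * t)) (k * Real.exp (k * t)) t := by
    simpa [mul_comm] using ((hasDerivAt_id t).const_mul k).exp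
  rw [← integral_Ioc_eq_integral_Ioo, ← intervalIntegral.integral_of_le hs,
    intervalIntegral.integral_eq_sub_of_hasDerivAt (fun t _ ↦ hderiv t)
      (Continuous.intervalIntegrable (by fun_prop) _ _), mul_zero, Real.exp_zero]

theorem EReal.exp_neg_mul_eq_one_add_lintegral {k : ℝ} (hk : 0 < k) {y : EReal} (hy : y ≤ 0) :
    EReal.exp (↑(-k) * y) = 1 + ∫⁻ t in Ioi 0,
      {t : ℝ | y < ↑(-t)}.indicator (fun t ↦ ENNReal.ofReal (k * Real.exp (k * t))) t := by
  induction y with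
  | bot =>
    have hall : {t : ℝ | (⊥ : EReal) < ↑(-t)} = univ :=
      eq_univ_of_forall fun t ↦ EReal.bot_lt_coe _
    rw [EReal.coe_mul_bot_of_neg (neg_neg_of_pos hk), EReal.exp_top, hall, indicator_univ,
      eq_comm, eq_top_iff]
    calc ⊤ = ∫⁻ _ in Ioi (0 : ℝ), ENNReal.ofReal k := by simp [hk]
      _ ≤ ∫⁻ t in Ioi 0, ENNReal.ofReal (k * Real.exp (k * t)) :=
        setLIntegral_mono' measurableSet_Ioi fun t ht ↦ ofReal_le_ofReal <|
          le_mul_of_one_le_right hk.le (Real.one_le_exp (mul_nonneg hk.le (le_of_lt ht)))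
      _ ≤ _ := le_add_self
  | coe r =>
    have hr : 0 ≤ -r := neg_nonneg.2 (EReal.coe_nonpos.1 hy)
    have hset : {t : ℝ | (r : EReal) < ↑(-t)} = Iio (-r) := by
      ext t
      simp only [mem_ofPred_eq, mem_Iio, EReal.coe_lt_coe_iff]
      constructor <;> intro h <;> linarith
    rw [hset, lintegral_indicator measurableSet_Iio, Measure.restrict_restrict measurableSet_Iio,
      Iio_inter_Ioi, ← ofReal_integral_eq_lintegral_ofReal, integral_Ioo_mul_exp_mul hr,
      ← EReal.coe_mul, EReal.exp_coe, ← ofReal_one, ← ofReal_add zero_le_one]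
    · ring_nf
    · linarith [Real.one_le_exp (mul_nonneg hk.le hr)]
    · exact (continuous_const.mul (by fun_prop)).integrableOn_Icc.mono_set Ioo_subset_Icc_self
    · exact ae_of_all _ fun t ↦ by positivity
  | top => simp at hy

theorem EReal.ofReal_exp_le_exp_neg_mul {c t : ℝ} (hc : 0 ≤ c) {y : EReal} (hy : y < ↑(-t)) :
    ENNReal.ofReal (Real.exp (c * t)) ≤ EReal.exp (↑(-c) * y) := by
  rw [← EReal.exp_coe, show c * t = -t * -c by ring, EReal.coe_mul, mul_comm (↑(-c) : EReal)]
  exact EReal.exp_monotone (EReal.mul_le_mul_of_nonpos_right hy.le (by simpa using hc))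

section LayerCake

variable {α : Type*} [MeasurableSpace α] {μ : Measure α} {s : Set α} {φ : α → EReal}

theorem setLIntegral_EReal_exp_neg_mul_eq_add_lintegral (hs : MeasurableSet s) (hμs : μ s < ⊤)
    (hφ : Measurable φ) (hφs : ∀ x ∈ s, φ x ≤ 0) {k : ℝ} (hk : 0 < k) :
    ∫⁻ x in s, EReal.exp (↑(-k) * φ x) ∂μ = μ s + ∫⁻ t in Ioi 0,
      ENNReal.ofReal (k * Real.exp (k * t)) * μ {x | x ∈ s ∧ φ x < ↑(-t)} := by
  have : IsFiniteMeasure (μ.restrict s) := isFiniteMeasure_restrict.2 hμs.ne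
  set w : ℝ → ℝ≥0∞ := fun t ↦ ENNReal.ofReal (k * Real.exp (k * t))
  have hmeas : Measurable (Function.uncurry fun x t ↦ {t : ℝ | φ x < ↑(-t)}.indicator w t) :=
    (show Measurable fun p : α × ℝ ↦ w p.2 by fun_prop).indicator
      (measurableSet_lt (hφ.comp measurable_fst) measurable_snd.neg.coe_real_ereal)
  calc ∫⁻ x in s, EReal.exp (↑(-k) * φ x) ∂μ
      = ∫⁻ x in s, (1 + ∫⁻ t in Ioi 0, {t : ℝ | φ x < ↑(-t)}.indicator w t) ∂μ :=
        setLIntegral_congr_fun hs fun x hx ↦ EReal.exp_neg_mul_eq_one_add_lintegral hk (hφs x hx)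
    _ = μ s + ∫⁻ t in Ioi 0, (∫⁻ x in s, {t : ℝ | φ x < ↑(-t)}.indicator w t ∂μ) := by
        rw [lintegral_add_left measurable_const, setLIntegral_one,
          lintegral_lintegral_swap hmeas.aemeasurable]
    _ = _ := by
        congr 1
        refine lintegral_congr fun t ↦ ?_
        change ∫⁻ x in s, {x | φ x < ↑(-t)}.indicator (fun _ ↦ w t) x ∂μ = _
        rw [lintegral_indicator_const (measurableSet_lt hφ measurable_const),
          Measure.restrict_apply (measurableSet_lt hφ measurable_const), inter_comm]
        rfl

theorem measure_sublevel_le_of_setLIntegral_exp_le (hφ : Measurable φ) {c B : ℝ} (hc : 0 ≤ c)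
    (hB : ∫⁻ x in s, EReal.exp (↑(-c) * φ x) ∂μ ≤ ENNReal.ofReal B) (t : ℝ) :
    μ {x | x ∈ s ∧ φ x < ↑(-t)} ≤ ENNReal.ofReal (B * Real.exp (-(c * t))) := by
  set ε := ENNReal.ofReal (Real.exp (c * t))
  have hsub : {x | x ∈ s ∧ φ x < ↑(-t)} ⊆ {x | ε ≤ EReal.exp (↑(-c) * φ x)} ∩ s :=
    fun x hx ↦ ⟨EReal.ofReal_exp_le_exp_neg_mul hc hx.2, hx.1⟩
  have hmarkov := mul_meas_ge_le_lintegral₀ (μ := μ.restrict s)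
    (f := fun x ↦ EReal.exp (↑(-c) * φ x)) (by fun_prop) ε
  rw [Real.exp_neg, ← div_eq_mul_inv, ofReal_div_of_pos (Real.exp_pos _),
    ENNReal.le_div_iff_mul_le (Or.inl (by simp [Real.exp_pos])) (Or.inl ofReal_ne_top),
    mul_comm]
  exact (mul_le_mul_right ((measure_mono hsub).trans (Measure.le_restrict_apply _ _)) ε).trans
    (hmarkov.trans hB)

end LayerCake

theorem setLIntegral_Ioi_le_add_add (f : ℝ → ℝ≥0∞) {a b c : ℝ} (hab : a ≤ b)
    (hbc : b ≤ c) :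
    ∫⁻ t in Ioi a, f t ≤
      (∫⁻ t in Ioc a b, f t) + (∫⁻ t in Ioc b c, f t) + ∫⁻ t in Ioi c, f t :=
  calc ∫⁻ t in Ioi a, f t = ∫⁻ t in Ioc a b ∪ Ioc b c ∪ Ioi c, f t := by
        rw [Ioc_union_Ioc_eq_Ioc hab hbc, Ioc_union_Ioi_eq_Ioi (hab.trans hbc)]
    _ ≤ _ := (lintegral_union_le _ _ _).trans (add_le_add_left (lintegral_union_le _ _ _) _)

theorem ENNReal.ofReal_mul_le_of_le_ofReal {w b r : ℝ} {F : ℝ≥0∞} (hw : 0 ≤ w)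
    (hF : F ≤ ENNReal.ofReal b) (h : w * b ≤ r) : ENNReal.ofReal w * F ≤ ENNReal.ofReal r :=
  (mul_le_mul_right hF _).trans ((ofReal_mul hw).symm.trans_le (ofReal_le_ofReal h))

theorem setLIntegral_le_ofReal_mul_integral_exp {f : ℝ → ℝ≥0∞} {s S : Set ℝ} {K a : ℝ}
    (hK : 0 ≤ K) (hsS : s ⊆ S) (hS : IntegrableOn (fun t ↦ Real.exp (a * t)) S)
    (hf : ∀ t ∈ s, f t ≤ ENNReal.ofReal (K * Real.exp (a * t))) :
    ∫⁻ t in s, f t ≤ ENNReal.ofReal (K * ∫ t in S, Real.exp (a * t)) :=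
  calc ∫⁻ t in s, f t ≤ ∫⁻ t in s, ENNReal.ofReal (K * Real.exp (a * t)) :=
        setLIntegral_mono (by fun_prop) hf
    _ ≤ ∫⁻ t in S, ENNReal.ofReal (K * Real.exp (a * t)) := lintegral_mono_set hsS
    _ = _ := by
        rw [← integral_const_mul, ofReal_integral_eq_lintegral_ofReal (hS.const_mul K)
          (ae_of_all _ fun t ↦ mul_nonneg hK (Real.exp_pos _).le)]

theorem setLIntegral_Ioi_deriv_mul_comp_le {f f' : ℝ → ℝ} {b : ℝ} {S : Set ℝ}
    (hf : ∀ t ∈ Ioi b, HasDerivAt f (f' t) t) (hf' : ∀ t ∈ Ioi b, 0 ≤ f' t)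
    (hS : MapsTo f (Ioi b) S) (g : ℝ → ℝ≥0∞) :
    ∫⁻ t in Ioi b, ENNReal.ofReal (f' t) * g (f t) ≤ ∫⁻ y in S, g y := by
  have hmono : MonotoneOn f (Ioi b) :=
    monotoneOn_of_hasDerivWithinAt_nonneg (convex_Ioi b)
      (fun t ht ↦ (hf t ht).continuousAt.continuousWithinAt)
      (by simpa using fun t ht ↦ (hf t ht).hasDerivWithinAt) (by simpa using hf')
  rw [← lintegral_image_eq_lintegral_deriv_mul_of_monotoneOn measurableSet_Ioi
    (fun t ht ↦ (hf t ht).hasDerivWithinAt) hmono]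
  exact lintegral_mono_set hS.image_subset

theorem one_add_two_mul_pow_mul_exp_le {n : ℕ} (hn : n ≠ 0) {y : ℝ} (hy : 0 ≤ y) :
    (1 + 2 * y) ^ (n - 1) * Real.exp (-(2 * n) * y) ≤ Real.exp (-2 * y) :=
  calc _ ≤ Real.exp (2 * y) ^ (n - 1) * Real.exp (-(2 * n) * y) := by
        gcongr
        linarith [Real.add_one_le_exp (2 * y)]
    _ = Real.exp (-2 * y) := by
        rw [← Real.exp_nat_mul, ← Real.exp_add, Nat.cast_sub (Nat.one_le_iff_ne_zero.2 hn)]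
        ring_nf

theorem integrableOn_one_add_two_mul_pow_mul_exp {n : ℕ} (hn : n ≠ 0) :
    IntegrableOn (fun y : ℝ ↦ (1 + 2 * y) ^ (n - 1) * Real.exp (-(2 * n) * y)) (Ioi 0) :=
  (integrableOn_exp_mul_Ioi (by norm_num : (-2 : ℝ) < 0) 0).mono'
    (by fun_prop : Continuous _).aestronglyMeasurable
    ((ae_restrict_iff' measurableSet_Ioi).2 (ae_of_all _ fun y (hy : 0 < y) ↦ by
      rw [Real.norm_of_nonneg (by positivity)]
      exact one_add_two_mul_pow_mul_exp_le hn hy.le))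

theorem setLIntegral_Ioc_zero_le_of_le_exp_neg {F : ℝ → ℝ≥0∞} {B c l T : ℝ}
    (hB : 0 ≤ B) (hl : 0 ≤ l) (hcl : c < l)
    (hF : ∀ t, F t ≤ ENNReal.ofReal (B * Real.exp (-(2 * c * t)))) :
    ∫⁻ t in Ioc 0 T, ENNReal.ofReal (2 * l * Real.exp (2 * l * t)) * F t ≤
      ENNReal.ofReal (2 * l * (B / (2 * (l - c)) * Real.exp (2 * (l - c) * T))) := by
  have ha : 0 < 2 * (l - c) := by linarith
  calc _ ≤ ENNReal.ofReal (2 * l * B * ∫ t in Iic T, Real.exp (2 * (l - c) * t)) := by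
        refine setLIntegral_le_ofReal_mul_integral_exp (by positivity) Ioc_subset_Iic_self
          (integrableOn_exp_mul_Iic ha T) fun t _ ↦
            ENNReal.ofReal_mul_le_of_le_ofReal (by positivity) (hF t) (le_of_eq ?_)
        rw [show 2 * (l - c) * t = 2 * l * t + -(2 * c * t) by ring, Real.exp_add]
        ring
    _ = _ := by
        rw [integral_exp_mul_Iic ha]
        ring_nf

theorem Real.rpow_add_mul_rpow_sub_one_mul_le {p T t : ℝ} (hp : 1 ≤ p) (hT : 0 < T)
    (ht : T ≤ t) :
    T ^ p + p * T ^ (p - 1) * (t - T) ≤ t ^ p := by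
  have hq : 0 ≤ (t - T) / T := div_nonneg (sub_nonneg.2 ht) hT.le
  have hbern := one_add_mul_self_le_rpow_one_add (by linarith : -1 ≤ (t - T) / T) hp
  have ht' : t = T * (1 + (t - T) / T) := by field_simp; ring
  calc T ^ p + p * T ^ (p - 1) * (t - T) = T ^ p * (1 + p * ((t - T) / T)) := by
        rw [Real.rpow_sub_one hT.ne']; field_simp
    _ ≤ T ^ p * (1 + (t - T) / T) ^ p := by gcongr
    _ = t ^ p := by rw [← Real.mul_rpow hT.le (by linarith), ← ht']

noncomputable def sublevelProfile (n : ℕ) (A t : ℝ) : ℝ :=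
  t ^ (((n : ℝ) + 1) / n) * A ^ (-1 / (n : ℝ))

-- With `D = C δ^{2n}`, `sublevelBound n A D t` is the right-hand side of hypothesis (i).
noncomputable def sublevelBound (n : ℕ) (A D t : ℝ) : ℝ :=
  D * (1 + sublevelProfile n A t) ^ (n - 1) * Real.exp (-(2 * n) * sublevelProfile n A t)

noncomputable def sublevelRate (n : ℕ) (A t : ℝ) : ℝ :=
  t ^ (1 / (n : ℝ)) * A ^ (-1 / (n : ℝ))

section SublevelProfile

variable {n : ℕ} {A : ℝ}

theorem sublevelProfile_eq_mul_sublevelRate (hn : n ≠ 0) {t : ℝ} (ht : 0 ≤ t) :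
    sublevelProfile n A t = t * sublevelRate n A t := by
  have hn' : (n : ℝ) ≠ 0 := Nat.cast_ne_zero.2 hn
  rw [sublevelProfile, sublevelRate, show ((n : ℝ) + 1) / n = 1 + 1 / n by field_simp,
    Real.rpow_add' ht (by positivity), Real.rpow_one, mul_assoc]

theorem sublevelRate_mul_pow (hn : n ≠ 0) (hA : 0 < A) {s : ℝ} (hs : 0 ≤ s) :
    sublevelRate n A (A * s ^ n) = s := by
  have hn' : (n : ℝ) ≠ 0 := Nat.cast_ne_zero.2 hn
  rw [sublevelRate, Real.mul_rpow hA.le (by positivity), ← Real.rpow_natCast,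
    ← Real.rpow_mul hs, mul_one_div_cancel hn', Real.rpow_one, mul_right_comm,
    ← Real.rpow_add hA, ← add_div, add_neg_cancel, zero_div, Real.rpow_zero, one_mul]

theorem sublevelProfile_mul_pow (hn : n ≠ 0) (hA : 0 < A) {s : ℝ} (hs : 0 ≤ s) :
    sublevelProfile n A (A * s ^ n) = A * s ^ n * s := by
  rw [sublevelProfile_eq_mul_sublevelRate hn (by positivity), sublevelRate_mul_pow hn hA hs]

theorem le_sublevelRate (hn : n ≠ 0) (hA : 0 < A) {s t : ℝ} (hs : 0 ≤ s)
    (ht : A * s ^ n ≤ t) :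
    s ≤ sublevelRate n A t := by
  conv_lhs => rw [← sublevelRate_mul_pow hn hA hs]
  unfold sublevelRate
  gcongr

theorem sublevelProfile_le_sublevelProfile (hA : 0 < A) {t t' : ℝ} (ht : 0 ≤ t)
    (htt' : t ≤ t') :
    sublevelProfile n A t ≤ sublevelProfile n A t' := by
  unfold sublevelProfile
  gcongr

theorem hasDerivAt_sublevelProfile (hn : n ≠ 0) {t : ℝ} (ht : 0 < t) :
    HasDerivAt (sublevelProfile n A) (((n : ℝ) + 1) / n * sublevelRate n A t) t := by
  have hn' : (n : ℝ) ≠ 0 := Nat.cast_ne_zero.2 hn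
  have hp : ((n : ℝ) + 1) / n - 1 = 1 / n := by field_simp; ring
  have h := (Real.hasDerivAt_rpow_const (p := ((n : ℝ) + 1) / n) (Or.inl ht.ne')).mul_const
    (A ^ (-1 / (n : ℝ)))
  rwa [hp, mul_assoc] at h

/-- The tangent line of the convex function `sublevelProfile n A` at `A sⁿ`. -/
theorem tangent_le_sublevelProfile (hn : n ≠ 0) (hA : 0 < A) {s t : ℝ} (hs : 0 < s)
    (ht : A * s ^ n ≤ t) :
    A * s ^ n * s + ((n : ℝ) + 1) / n * s * (t - A * s ^ n) ≤ sublevelProfile n A t := by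
  have hn' : (n : ℝ) ≠ 0 := Nat.cast_ne_zero.2 hn
  have hT : 0 < A * s ^ n := by positivity
  have hp : ((n : ℝ) + 1) / n - 1 = 1 / n := by field_simp; ring
  have hrate := sublevelRate_mul_pow hn hA hs.le
  have htan := mul_le_mul_of_nonneg_right (Real.rpow_add_mul_rpow_sub_one_mul_le
    (p := ((n : ℝ) + 1) / n) (by rw [le_div_iff₀ (by positivity)]; linarith) hT ht)
    (by positivity : 0 ≤ A ^ (-1 / (n : ℝ)))
  rw [← sublevelProfile_mul_pow hn hA hs.le]
  unfold sublevelProfile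
  unfold sublevelRate at hrate
  rw [hp] at htan
  linear_combination htan - (((n : ℝ) + 1) / n * (t - A * s ^ n)) * hrate

theorem sublevelProfile_nonneg (hA : 0 < A) {t : ℝ} (ht : 0 ≤ t) :
    0 ≤ sublevelProfile n A t := by
  unfold sublevelProfile
  positivity

theorem two_mul_sub_two_mul_sublevelProfile_le (hn : n ≠ 0) (hA : 0 < A) {c l t : ℝ}
    (hc : 0 < c) (ht : A * (c / n) ^ n ≤ t) :
    2 * l * t - 2 * n * sublevelProfile n A t ≤
      2 * (l - c) * (A * (c / n) ^ n) -
        2 * (((n : ℝ) + 1) * c / n - l) * (t - A * (c / n) ^ n) := by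
  have hn' : (0 : ℝ) < n := Nat.cast_pos.2 (Nat.pos_of_ne_zero hn)
  have htan := mul_le_mul_of_nonneg_left (tangent_le_sublevelProfile hn hA (by positivity) ht)
    (by positivity : (0 : ℝ) ≤ 2 * n)
  have hlin : 2 * (n : ℝ) * (A * (c / n) ^ n * (c / n) + ((n : ℝ) + 1) / n * (c / n) *
      (t - A * (c / n) ^ n)) =
        2 * c * (A * (c / n) ^ n) + 2 * (((n : ℝ) + 1) * c / n) * (t - A * (c / n) ^ n) := by
    field_simp
  linarith

theorem two_mul_exp_mul_sublevelBound_le_of_mem_Icc (hn : n ≠ 0) (hA : 0 < A) {D c l t t₂ : ℝ}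
    (hD : 0 ≤ D) (hc : 0 < c) (hl : 0 ≤ l) (ht : t ∈ Icc (A * (c / n) ^ n) t₂) :
    2 * l * Real.exp (2 * l * t) * sublevelBound n A D t ≤
      2 * l * D * (1 + sublevelProfile n A t₂) ^ (n - 1) *
        Real.exp (2 * (l - c) * (A * (c / n) ^ n) -
          2 * (((n : ℝ) + 1) * c / n - l) * (t - A * (c / n) ^ n)) := by
  have ht0 : 0 ≤ t := le_trans (by positivity) ht.1
  have hX := sublevelProfile_nonneg (n := n) hA ht0
  have hpow : (1 + sublevelProfile n A t) ^ (n - 1) ≤ (1 + sublevelProfile n A t₂) ^ (n - 1) :=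
    pow_le_pow_left₀ (by linarith) (by
      linarith [sublevelProfile_le_sublevelProfile (n := n) hA ht0 ht.2]) _
  have hexp := Real.exp_le_exp.2 (two_mul_sub_two_mul_sublevelProfile_le (l := l) hn hA hc ht.1)
  calc 2 * l * Real.exp (2 * l * t) * sublevelBound n A D t
      = 2 * l * D * (1 + sublevelProfile n A t) ^ (n - 1) *
          Real.exp (2 * l * t - 2 * n * sublevelProfile n A t) := by
        rw [sublevelBound, sub_eq_add_neg, Real.exp_add]
        ring_nf
    _ ≤ _ := by
        have hX₂ := sublevelProfile_nonneg (n := n) hA (ht0.trans ht.2)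
        gcongr

theorem setLIntegral_Ioc_le_of_le_sublevelBound (hn : n ≠ 0) (hA : 0 < A) {D c l : ℝ}
    (hD : 0 ≤ D) (hc : 0 < c) (hl : 0 ≤ l) (hlc : l < ((n : ℝ) + 1) * c / n)
    {F : ℝ → ℝ≥0∞} (hF : ∀ t, 0 < t → F t ≤ ENNReal.ofReal (sublevelBound n A D t))
    {t₂ : ℝ} (ht₂ : 0 ≤ t₂) :
    ∫⁻ t in Ioc (A * (c / n) ^ n) t₂, ENNReal.ofReal (2 * l * Real.exp (2 * l * t)) * F t ≤
      ENNReal.ofReal (2 * l * (1 / 2 * D * (1 + sublevelProfile n A t₂) ^ (n - 1) *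
        (((n : ℝ) + 1) * c / n - l)⁻¹ * Real.exp (2 * (l - c) * (A * (c / n) ^ n)))) := by
  set t₁ := A * (c / n) ^ n
  set κ := ((n : ℝ) + 1) * c / n - l
  have hκ : 0 < κ := sub_pos.2 hlc
  have ht₁ : 0 < t₁ := by positivity
  set E := 2 * l * D * (1 + sublevelProfile n A t₂) ^ (n - 1)
  have hE : 0 ≤ E := by have := sublevelProfile_nonneg (n := n) hA ht₂; positivity
  calc _ ≤ ENNReal.ofReal (E * Real.exp (2 * (l - c) * t₁ + 2 * κ * t₁) *
        ∫ t in Ioi t₁, Real.exp (-(2 * κ) * t)) := by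
        refine setLIntegral_le_ofReal_mul_integral_exp (by positivity) Ioc_subset_Ioi_self
          (integrableOn_exp_mul_Ioi (by linarith) t₁) fun t ht ↦
            ENNReal.ofReal_mul_le_of_le_ofReal (by positivity) (hF t (ht₁.trans ht.1)) ?_
        refine (two_mul_exp_mul_sublevelBound_le_of_mem_Icc hn hA hD hc hl
          (Ioc_subset_Icc_self ht)).trans_eq ?_
        rw [mul_assoc E, ← Real.exp_add]
        simp only [E, t₁, κ]
        congr 2
        ring
    _ = _ := by
        rw [integral_exp_mul_Ioi (by linarith), Real.exp_add, neg_div_neg_eq,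
          show -(2 * κ) * t₁ = -(2 * κ * t₁) by ring, Real.exp_neg]
        congr 1
        field_simp
        ring

theorem mul_le_sublevelProfile (hn : n ≠ 0) (hA : 0 < A) {s t : ℝ} (hs : 0 ≤ s)
    (ht : A * s ^ n ≤ t) : s * t ≤ sublevelProfile n A t := by
  have ht0 : 0 ≤ t := le_trans (by positivity) ht
  rw [sublevelProfile_eq_mul_sublevelRate hn ht0, mul_comm]
  exact mul_le_mul_of_nonneg_left (le_sublevelRate hn hA hs ht) ht0

noncomputable def sublevelShift (n : ℕ) (A l t : ℝ) : ℝ := sublevelProfile n A t - l / n * t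

theorem hasDerivAt_sublevelShift (hn : n ≠ 0) {l t : ℝ} (ht : 0 < t) :
    HasDerivAt (sublevelShift n A l) (((n : ℝ) + 1) / n * sublevelRate n A t - l / n) t := by
  have h := (hasDerivAt_sublevelProfile (A := A) hn ht).sub ((hasDerivAt_id' t).const_mul (l / n))
  rwa [mul_one] at h

theorem div_mul_le_sublevelShift (hn : n ≠ 0) (hA : 0 < A) {l t : ℝ} (hl : 0 ≤ l)
    (ht : A * (2 * l / n) ^ n ≤ t) : l / n * t ≤ sublevelShift n A l t := by
  have := mul_le_sublevelProfile hn hA (by positivity) ht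
  rw [sublevelShift]
  linarith [show 2 * l / n * t = 2 * (l / n * t) by ring]

theorem le_deriv_sublevelShift (hn : n ≠ 0) (hA : 0 < A) {l t : ℝ} (hl : 0 ≤ l)
    (ht : A * (2 * l / n) ^ n ≤ t) :
    l * ((n : ℝ) + 2) / n ^ 2 ≤ ((n : ℝ) + 1) / n * sublevelRate n A t - l / n := by
  have := mul_le_mul_of_nonneg_left (le_sublevelRate hn hA (by positivity) ht)
    (by positivity : (0 : ℝ) ≤ ((n : ℝ) + 1) / n)
  have hn' : (n : ℝ) ≠ 0 := Nat.cast_ne_zero.2 hn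
  have hm : l * ((n : ℝ) + 2) / n ^ 2 = ((n : ℝ) + 1) / n * (2 * l / n) - l / n := by
    field_simp; ring
  linarith

theorem two_mul_exp_mul_sublevelBound_le_sublevelShift (hn : n ≠ 0) (hA : 0 < A) {D l t : ℝ}
    (hD : 0 ≤ D) (hl : 0 < l) (ht : A * (2 * l / n) ^ n ≤ t) :
    2 * l * Real.exp (2 * l * t) * sublevelBound n A D t ≤
      2 * l * D / (l * ((n : ℝ) + 2) / n ^ 2) *
        ((((n : ℝ) + 1) / n * sublevelRate n A t - l / n) *
          ((1 + 2 * sublevelShift n A l t) ^ (n - 1) *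
            Real.exp (-(2 * n) * sublevelShift n A l t))) := by
  have hn' : (0 : ℝ) < n := Nat.cast_pos.2 (Nat.pos_of_ne_zero hn)
  have ht0 : 0 ≤ t := le_trans (by positivity) ht
  have hx := div_mul_le_sublevelShift hn hA hl.le ht
  have hX := mul_le_sublevelProfile hn hA (by positivity) ht
  have hx0 : 0 ≤ sublevelShift n A l t := le_trans (by positivity) hx
  have hm : 0 < l * ((n : ℝ) + 2) / n ^ 2 := by positivity
  have hone := (one_le_div hm).2 (le_deriv_sublevelShift hn hA hl.le ht)
  calc 2 * l * Real.exp (2 * l * t) * sublevelBound n A D t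
      = 2 * l * D * ((1 + sublevelProfile n A t) ^ (n - 1) *
          Real.exp (-(2 * n) * sublevelShift n A l t)) := by
        rw [sublevelBound, mul_assoc (2 * l), mul_comm (Real.exp _),
          show -(2 * (n : ℝ)) * sublevelShift n A l t =
            2 * l * t + -(2 * n) * sublevelProfile n A t by rw [sublevelShift]; field_simp; ring,
          Real.exp_add]
        ring
    _ ≤ 2 * l * D * ((((n : ℝ) + 1) / n * sublevelRate n A t - l / n) /
          (l * ((n : ℝ) + 2) / n ^ 2) * ((1 + 2 * sublevelShift n A l t) ^ (n - 1) *
            Real.exp (-(2 * n) * sublevelShift n A l t))) := by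
        have hX0 := sublevelProfile_nonneg (n := n) hA ht0
        refine mul_le_mul_of_nonneg_left (le_mul_of_one_le_left (by positivity) hone |>.trans' ?_)
          (by positivity)
        gcongr
        rw [sublevelShift]
        linarith [show 2 * l / n * t = 2 * (l / n * t) by ring]
    _ = _ := by ring

theorem lintegral_Ioi_ofReal_one_add_two_mul_pow_mul_exp {n : ℕ} (hn : n ≠ 0) :
    ∫⁻ y in Ioi 0, ENNReal.ofReal ((1 + 2 * y) ^ (n - 1) * Real.exp (-(2 * n) * y)) =
      ENNReal.ofReal (∫ y in Ioi 0, (1 + 2 * y) ^ (n - 1) * Real.exp (-(2 * n) * y)) :=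
  (ofReal_integral_eq_lintegral_ofReal (integrableOn_one_add_two_mul_pow_mul_exp hn)
    ((ae_restrict_iff' measurableSet_Ioi).2
      (ae_of_all _ fun y (hy : 0 < y) ↦ by positivity))).symm

theorem setLIntegral_Ioi_le_of_le_sublevelBound (hn : n ≠ 0) (hA : 0 < A) {D l : ℝ}
    (hD : 0 ≤ D) (hl : 0 < l) {F : ℝ → ℝ≥0∞}
    (hF : ∀ t, 0 < t → F t ≤ ENNReal.ofReal (sublevelBound n A D t)) :
    ∫⁻ t in Ioi (A * (2 * l / n) ^ n), ENNReal.ofReal (2 * l * Real.exp (2 * l * t)) * F t ≤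
      ENNReal.ofReal (2 * l * (D * ((n : ℝ) ^ 2 / (l * ((n : ℝ) + 2))) *
        ∫ y in Ioi (0 : ℝ), (1 + 2 * y) ^ (n - 1) * Real.exp (-(2 * n) * y))) := by
  set t₂ := A * (2 * l / n) ^ n
  set m := l * ((n : ℝ) + 2) / n ^ 2
  set x' : ℝ → ℝ := fun t ↦ ((n : ℝ) + 1) / n * sublevelRate n A t - l / n
  set g : ℝ → ℝ := fun y ↦ (1 + 2 * y) ^ (n - 1) * Real.exp (-(2 * n) * y)
  have hn' : (0 : ℝ) < n := Nat.cast_pos.2 (Nat.pos_of_ne_zero hn)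
  have hm : 0 < m := by positivity
  have hpos (t : ℝ) (ht : t ∈ Ioi t₂) : 0 < t := lt_of_le_of_lt (by positivity) ht
  have hx' (t : ℝ) (ht : t ∈ Ioi t₂) : 0 ≤ x' t :=
    hm.le.trans (le_deriv_sublevelShift hn hA hl.le (le_of_lt ht))
  calc _ ≤ ∫⁻ t in Ioi t₂, ENNReal.ofReal (2 * l * D / m) *
        (ENNReal.ofReal (x' t) * ENNReal.ofReal (g (sublevelShift n A l t))) := by
        refine setLIntegral_mono' measurableSet_Ioi fun t ht ↦ ?_
        rw [← ofReal_mul (hx' t ht), ← ofReal_mul (by positivity)]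
        exact ENNReal.ofReal_mul_le_of_le_ofReal (by positivity) (hF t (hpos t ht))
          (two_mul_exp_mul_sublevelBound_le_sublevelShift hn hA hD hl (le_of_lt ht))
    _ = ENNReal.ofReal (2 * l * D / m) *
        ∫⁻ t in Ioi t₂, ENNReal.ofReal (x' t) * ENNReal.ofReal (g (sublevelShift n A l t)) :=
        lintegral_const_mul' _ _ ofReal_ne_top
    _ ≤ ENNReal.ofReal (2 * l * D / m) * ∫⁻ y in Ioi 0, ENNReal.ofReal (g y) :=
        mul_le_mul_right (setLIntegral_Ioi_deriv_mul_comp_le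
          (fun t ht ↦ hasDerivAt_sublevelShift hn (hpos t ht)) hx'
          (fun t ht ↦ lt_of_lt_of_le (by have := hpos t ht; positivity)
            (div_mul_le_sublevelShift hn hA hl.le (le_of_lt ht))) _) _
    _ = _ := by
        have hcoef : 2 * l * D / m = 2 * l * (D * ((n : ℝ) ^ 2 / (l * ((n : ℝ) + 2)))) := by
          simp only [m]
          field_simp
        rw [lintegral_Ioi_ofReal_one_add_two_mul_pow_mul_exp hn, ← ofReal_mul (by positivity),
          hcoef, mul_assoc]

end SublevelProfile

theorem weighted_integral_bound_general {α : Type*} [MeasurableSpace α] (μ : Measure α)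
    (n : ℕ) (hn : 2 ≤ n) (Ω' : Set α) (hΩ'meas : MeasurableSet Ω') (hΩ' : μ Ω' < ⊤)
    (φ : α → EReal) (hφmeas : Measurable φ) (hφneg : ∀ x ∈ Ω', φ x ≤ 0)
    (A B c δ C : ℝ) (hA : 0 < A) (hB : 0 < B) (hc : 0 < c) (hC : 0 < C)
    (hsublevel : ∀ t : ℝ, 0 < t →
      μ {x | x ∈ Ω' ∧ φ x < ((-t : ℝ) : EReal)} ≤
        ENNReal.ofReal (C * δ ^ (2 * n) *
          (1 + t ^ (((n : ℝ) + 1) / n) * A ^ (-1 / (n : ℝ))) ^ (n - 1) *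
          Real.exp (-(2 * n) * (t ^ (((n : ℝ) + 1) / n) * A ^ (-1 / (n : ℝ))))))
    (hint : ∫⁻ x in Ω', EReal.exp ((↑(-(2 * c)) : EReal) * φ x) ∂μ ≤ ENNReal.ofReal B) :
    ∀ l : ℝ, c < l → l < ((n : ℝ) + 1) * c / n →
      ∫⁻ x in Ω', EReal.exp ((↑(-(2 * l)) : EReal) * φ x) ∂μ ≤
        μ Ω' + ENNReal.ofReal (2 * l *
          (B / (2 * (l - c)) * Real.exp (2 * (l - c) * A * c ^ n / (n : ℝ) ^ n) +
            (1 / 2) * C * δ ^ (2 * n) *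
              (1 + 2 ^ (n + 1) * A * l ^ (n + 1) / (n : ℝ) ^ (n + 1)) ^ (n - 1) *
              (((n : ℝ) + 1) * c / n - l)⁻¹ *
              Real.exp (2 * (l - c) * A * c ^ n / (n : ℝ) ^ n) +
            C * δ ^ (2 * n) * ((n : ℝ) ^ 2 / (l * ((n : ℝ) + 2))) *
              ∫ x in Set.Ioi (0 : ℝ), (1 + 2 * x) ^ (n - 1) * Real.exp (-(2 * n) * x))) := by
  intro l hcl hlc
  have hn0 : n ≠ 0 := by omega
  have hl : 0 < l := hc.trans hcl
  have hD : 0 ≤ C * δ ^ (2 * n) := mul_nonneg hC.le ((even_two_mul n).pow_nonneg δ)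
  have hcheb := measure_sublevel_le_of_setLIntegral_exp_le (c := 2 * c) hφmeas (by positivity) hint
  have ht₁₂ : A * (c / n) ^ n ≤ A * (2 * l / n) ^ n := by gcongr; linarith
  rw [setLIntegral_EReal_exp_neg_mul_eq_add_lintegral hΩ'meas hΩ' hφmeas hφneg (by positivity),
    show 2 * (l - c) * A * c ^ n / (n : ℝ) ^ n = 2 * (l - c) * (A * (c / n) ^ n) by ring,
    show 2 ^ (n + 1) * A * l ^ (n + 1) / (n : ℝ) ^ (n + 1) =
      sublevelProfile n A (A * (2 * l / n) ^ n) by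
        rw [sublevelProfile_mul_pow hn0 hA (by positivity)]; ring]
  refine add_le_add_right ((setLIntegral_Ioi_le_add_add _ (by positivity) ht₁₂).trans ?_) _
  refine (add_le_add (add_le_add
    (setLIntegral_Ioc_zero_le_of_le_exp_neg hB.le hl.le hcl hcheb)
    (setLIntegral_Ioc_le_of_le_sublevelBound hn0 hA hD hc hl.le hlc hsublevel (by positivity)))
    (setLIntegral_Ioi_le_of_le_sublevelBound hn0 hA hD hl hsublevel)).trans_eq ?_
  have hlc' : 0 < l - c := sub_pos.2 hcl
  have hκ : 0 < ((n : ℝ) + 1) * c / n - l := sub_pos.2 hlc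
  have hX₂ := sublevelProfile_nonneg (n := n) hA (t := A * (2 * l / n) ^ n) (by positivity)
  have hI : 0 ≤ ∫ x in Ioi (0 : ℝ), (1 + 2 * x) ^ (n - 1) * Real.exp (-(2 * n) * x) :=
    setIntegral_nonneg measurableSet_Ioi fun x (hx : 0 < x) ↦ by positivity
  rw [← ofReal_add, ← ofReal_add]
  · ring_nf
  all_goals positivity

/-- Measure-theoretic content of Lemma 2.4 of the paper: if `μ(Ω′) < ∞`,
`φ : Ω′ → [−∞, 0]` is measurable, `μ({φ < −t} ∩ Ω′)` satisfies the sublevel-set bound (i)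
and `∫_{Ω′} e^{−2cφ} dμ ≤ B` (ii), then for every `c < λ < (n+1)c/n` the weighted integral
`∫_{Ω′} e^{−2λφ} dμ` satisfies the stated explicit bound. -/
theorem weighted_integral_bound {α : Type*} [MeasurableSpace α] (μ : Measure α)
    (n : ℕ) (hn : 2 ≤ n) (Ω' : Set α) (hΩ'meas : MeasurableSet Ω') (hΩ' : μ Ω' < ⊤)
    (φ : α → EReal) (hφmeas : Measurable φ) (hφneg : ∀ x ∈ Ω', φ x ≤ 0)
    (A B c δ C : ℝ) (hA : 0 < A) (hB : 0 < B) (hc : 0 < c) (hδ : 0 < δ) (hC : 0 < C)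
    (hsublevel : ∀ t : ℝ, 0 < t →
      μ {x | x ∈ Ω' ∧ φ x < ((-t : ℝ) : EReal)} ≤
        ENNReal.ofReal (C * δ ^ (2 * n) *
          (1 + t ^ (((n : ℝ) + 1) / n) * A ^ (-1 / (n : ℝ))) ^ (n - 1) *
          Real.exp (-(2 * n) * (t ^ (((n : ℝ) + 1) / n) * A ^ (-1 / (n : ℝ))))))
    (hint : ∫⁻ x in Ω', EReal.exp ((↑(-(2 * c)) : EReal) * φ x) ∂μ ≤ ENNReal.ofReal B) :
    ∀ l : ℝ, c < l → l < ((n : ℝ) + 1) * c / n →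
      ∫⁻ x in Ω', EReal.exp ((↑(-(2 * l)) : EReal) * φ x) ∂μ ≤
        μ Ω' + ENNReal.ofReal (2 * l *
          (B / (2 * (l - c)) * Real.exp (2 * (l - c) * A * c ^ n / (n : ℝ) ^ n) +
            (1 / 2) * C * δ ^ (2 * n) *
              (1 + 2 ^ (n + 1) * A * l ^ (n + 1) / (n : ℝ) ^ (n + 1)) ^ (n - 1) *
              (((n : ℝ) + 1) * c / n - l)⁻¹ *
              Real.exp (2 * (l - c) * A * c ^ n / (n : ℝ) ^ n) +
            C * δ ^ (2 * n) * ((n : ℝ) ^ 2 / (l * ((n : ℝ) + 2))) *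
              ∫ x in Set.Ioi (0 : ℝ), (1 + 2 * x) ^ (n - 1) * Real.exp (-(2 * n) * x))) :=
  weighted_integral_bound_general μ n hn Ω' hΩ'meas hΩ' φ hφmeas hφneg A B c δ C hA hB hc hC
    hsublevel hint
end
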